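/- arXiv:1412.4843 — 9 statements merged into one kernel-verified Lean document; each statement's English description precedes it below -/
import Mathlib

section
/- Let f₁ : F → G and f₂ : G → H be continuously controlled homomorphisms between M-filtered modules and f₃ = f₂ ∘ f₁. If f₁ and f₂ are continuously bicontrolled and either f₁ is surjective or f₂ is injective, then f₃ is continuously bicontrolled. -/
open Set Topology

/-- An `M`-filtered `R`-module: a monotone assignment of submodules of the total
module `V = F(M)` to subsets of the ambient space `X`, depending only on the
intersection with `M`, with `F(∅) = 0` and `F(M) = V`.  (The structure maps of the
functor on the power set of `M` are the submodule inclusions, hence monomorphisms.) -/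
structure FilteredModule {X : Type*} [TopologicalSpace X] (R : Type*) [Ring R]
    (V : Type*) [AddCommGroup V] [Module R V] (M : Set X) : Type _ where
  F : Set X → Submodule R V
  mono : ∀ ⦃S T : Set X⦄, S ⊆ T → F S ≤ F T
  inter : ∀ S : Set X, F S = F (S ∩ M)
  empty : F ∅ = ⊥
  top : F M = ⊤

section Control

variable {X : Type*} [TopologicalSpace X] {R V W : Type*} [Ring R]
  [AddCommGroup V] [Module R V] [AddCommGroup W] [Module R W]

/-- Conditions (1) and (2) of continuous control, for the pair of sets `(V', U)`:
`f(F(M \ U)) ⊆ G(M \ V')` and `f(F(V' ∩ M)) ⊆ G(U ∩ M)`. -/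
def CtrlPair (M : Set X) (𝓕 : Set X → Submodule R V) (𝓖 : Set X → Submodule R W)
    (f : V →ₗ[R] W) (V' U : Set X) : Prop :=
  (𝓕 (M \ U)).map f ≤ 𝓖 (M \ V') ∧ (𝓕 (V' ∩ M)).map f ≤ 𝓖 (U ∩ M)

/-- Conditions (1)–(4): continuous bicontrol for the pair `(V', U)`; in addition to
`CtrlPair` one requires `G(M \ U) ∩ f(F(M)) ⊆ f(F(M \ V'))` and
`G(V' ∩ M) ∩ f(F(M)) ⊆ f(F(U ∩ M))`. -/
def BiCtrlPair (M : Set X) (𝓕 : Set X → Submodule R V) (𝓖 : Set X → Submodule R W)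
    (f : V →ₗ[R] W) (V' U : Set X) : Prop :=
  CtrlPair M 𝓕 𝓖 f V' U ∧
    𝓖 (M \ U) ⊓ LinearMap.range f ≤ (𝓕 (M \ V')).map f ∧
    𝓖 (V' ∩ M) ⊓ LinearMap.range f ≤ (𝓕 (U ∩ M)).map f

/-- `T` is an open subset of the boundary `Y = X \ M` (in the subspace topology). -/
def IsOpenInBoundary (M : Set X) (T : Set X) : Prop :=
  ∃ W : Set X, IsOpen W ∧ T = W ∩ Mᶜ

/-- `f` is continuously controlled near `T ⊆ Y`: for every open neighborhood `U` of
`T` in `X` there is an open neighborhood `V'` of `T` satisfying conditions (1),(2). -/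
def ControlledNear (M : Set X) (𝓕 : Set X → Submodule R V) (𝓖 : Set X → Submodule R W)
    (f : V →ₗ[R] W) (T : Set X) : Prop :=
  ∀ U : Set X, IsOpen U → T ⊆ U → ∃ V' : Set X, IsOpen V' ∧ T ⊆ V' ∧ CtrlPair M 𝓕 𝓖 f V' U

/-- `f` is continuously bicontrolled near `T ⊆ Y`. -/
def BicontrolledNear (M : Set X) (𝓕 : Set X → Submodule R V) (𝓖 : Set X → Submodule R W)
    (f : V →ₗ[R] W) (T : Set X) : Prop :=
  ∀ U : Set X, IsOpen U → T ⊆ U → ∃ V' : Set X, IsOpen V' ∧ T ⊆ V' ∧ BiCtrlPair M 𝓕 𝓖 f V' U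

/-- `f` is continuously controlled: continuously controlled near every open subset
of the boundary `Y = X \ M`. -/
def Controlled (M : Set X) (𝓕 : Set X → Submodule R V) (𝓖 : Set X → Submodule R W)
    (f : V →ₗ[R] W) : Prop :=
  ∀ T : Set X, IsOpenInBoundary M T → ControlledNear M 𝓕 𝓖 f T

/-- `f` is continuously bicontrolled: bicontrolled near every open subset of `Y`. -/
def Bicontrolled (M : Set X) (𝓕 : Set X → Submodule R V) (𝓖 : Set X → Submodule R W)
    (f : V →ₗ[R] W) : Prop :=
  ∀ T : Set X, IsOpenInBoundary M T → BicontrolledNear M 𝓕 𝓖 f T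

/-- `f` is continuously controlled at the point `y ∈ Y`: for every neighborhood `U`
of `y` in `X` there is a neighborhood `V' ⊆ U` of `y` with conditions (1),(2). -/
def ControlledAt (M : Set X) (𝓕 : Set X → Submodule R V) (𝓖 : Set X → Submodule R W)
    (f : V →ₗ[R] W) (y : X) : Prop :=
  ∀ U ∈ nhds y, ∃ V' ∈ nhds y, V' ⊆ U ∧ CtrlPair M 𝓕 𝓖 f V' U

/-- The submodule `H` is supported near `T ⊆ Y`: there is a closed subset `C` of `X`
with `H ⊆ F(C ∩ M)` and `C ∩ Y ⊆ T`. -/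
def SuppNear (M : Set X) (𝓕 : Set X → Submodule R V) (H : Submodule R V)
    (T : Set X) : Prop :=
  ∃ C : Set X, IsClosed C ∧ H ≤ 𝓕 (C ∩ M) ∧ C ∩ Mᶜ ⊆ T

/-- Insular at infinity: a submodule supported near `T₁ ⊆ Y` and near `T₂ ⊆ Y`
is supported near `T₁ ∩ T₂`. -/
def InsularAtInfinity (M : Set X) (𝓕 : Set X → Submodule R V) : Prop :=
  ∀ T₁ T₂ : Set X, T₁ ⊆ Mᶜ → T₂ ⊆ Mᶜ → ∀ H : Submodule R V,
    SuppNear M 𝓕 H T₁ → SuppNear M 𝓕 H T₂ → SuppNear M 𝓕 H (T₁ ∩ T₂)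

/-- Split at infinity: a submodule supported near `U₁ ∪ U₂` is contained in the sum
of two submodules supported near `U₁` and `U₂` respectively. -/
def SplitAtInfinity (M : Set X) (𝓕 : Set X → Submodule R V) : Prop :=
  ∀ U₁ U₂ : Set X, U₁ ⊆ Mᶜ → U₂ ⊆ Mᶜ → ∀ H : Submodule R V,
    SuppNear M 𝓕 H (U₁ ∪ U₂) →
      ∃ H₁ H₂ : Submodule R V, H ≤ H₁ ⊔ H₂ ∧ SuppNear M 𝓕 H₁ U₁ ∧ SuppNear M 𝓕 H₂ U₂

end Control

variable {X : Type*} [MetricSpace X] [CompactSpace X] {R : Type*} [Ring R]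

/-- if `f₁, f₂` are continuously (bi)controlled and `f₁` is surjective
or `f₂` is injective, then `f₃ = f₂ ∘ f₁` is continuously bicontrolled. -/
theorem bicontrolled_comp
    {V₁ V₂ V₃ : Type*} [AddCommGroup V₁] [Module R V₁] [AddCommGroup V₂] [Module R V₂]
    [AddCommGroup V₃] [Module R V₃]
    {M : Set X} (hM : IsOpen M) (hdense : Dense M)
    (F : FilteredModule R V₁ M) (G : FilteredModule R V₂ M) (H : FilteredModule R V₃ M)
    (f₁ : V₁ →ₗ[R] V₂) (f₂ : V₂ →ₗ[R] V₃)
    (hc₁ : Controlled M F.F G.F f₁) (hc₂ : Controlled M G.F H.F f₂)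
    (hb₁ : Bicontrolled M F.F G.F f₁) (hb₂ : Bicontrolled M G.F H.F f₂)
    (hor : Function.Surjective f₁ ∨ Function.Injective f₂) :
    Bicontrolled M F.F H.F (f₂ ∘ₗ f₁) := by
  have hrange : ∀ g : V₂, (∀ v : V₁, f₂ g = f₂ (f₁ v) →
      g ∈ LinearMap.range f₁) := by
    intro g v hgv
    rcases hor with hs | hi
    · exact hs g
    · exact ⟨v, (hi hgv).symm⟩
  intro T hT U hU hTU
  obtain ⟨W₁, hW₁o, hTW₁, hcp₁, h₁₃, h₁₄⟩ := hb₁ T hT U hU hTU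
  obtain ⟨V₂, hV₂o, hTV₂, hcp₂, h₂₃, h₂₄⟩ := hb₂ T hT W₁ hW₁o hTW₁
  obtain ⟨W₂, hW₂o, hTW₂, hcp₂', h₂₃', h₂₄'⟩ := hb₂ T hT U hU hTU
  obtain ⟨V₁, hV₁o, hTV₁, hcp₁', h₁₃', h₁₄'⟩ := hb₁ T hT W₂ hW₂o hTW₂
  refine ⟨V₁ ∩ V₂, hV₁o.inter hV₂o, subset_inter hTV₁ hTV₂, ⟨?_, ?_⟩, ?_, ?_⟩
  · calc (F.F (M \ U)).map (f₂ ∘ₗ f₁)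
        = ((F.F (M \ U)).map f₁).map f₂ := (Submodule.map_comp f₁ f₂ _)
      _ ≤ (G.F (M \ W₁)).map f₂ := Submodule.map_mono hcp₁.1
      _ ≤ H.F (M \ V₂) := hcp₂.1
      _ ≤ H.F (M \ (V₁ ∩ V₂)) :=
          H.mono (diff_subset_diff_right inter_subset_right)
  · calc (F.F ((V₁ ∩ V₂) ∩ M)).map (f₂ ∘ₗ f₁)
        = ((F.F ((V₁ ∩ V₂) ∩ M)).map f₁).map f₂ := (Submodule.map_comp f₁ f₂ _)
      _ ≤ ((F.F (V₁ ∩ M)).map f₁).map f₂ :=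
          Submodule.map_mono (Submodule.map_mono
            (F.mono (inter_subset_inter_left _ inter_subset_left)))
      _ ≤ (G.F (W₂ ∩ M)).map f₂ := Submodule.map_mono hcp₁'.2
      _ ≤ H.F (U ∩ M) := hcp₂'.2
  · rintro x ⟨hxH, v, hv⟩
    obtain ⟨g, hg, hgx⟩ := h₂₃' (Submodule.mem_inf.mpr ⟨hxH, ⟨f₁ v, hv⟩⟩)
    obtain ⟨v', hv'⟩ := hrange g v (by rw [hgx, ← hv]; rfl)
    obtain ⟨w, hw, hwg⟩ := h₁₃' (Submodule.mem_inf.mpr ⟨hg, ⟨v', hv'⟩⟩)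
    exact ⟨w, F.mono (diff_subset_diff_right inter_subset_left) hw,
      by simp [LinearMap.comp_apply, hwg, hgx]⟩
  · rintro x ⟨hxH, v, hv⟩
    have hxH' : x ∈ H.F (V₂ ∩ M) :=
      H.mono (inter_subset_inter_left _ inter_subset_right) hxH
    obtain ⟨g, hg, hgx⟩ := h₂₄ (Submodule.mem_inf.mpr ⟨hxH', ⟨f₁ v, hv⟩⟩)
    obtain ⟨v', hv'⟩ := hrange g v (by rw [hgx, ← hv]; rfl)
    obtain ⟨w, hw, hwg⟩ := h₁₄ (Submodule.mem_inf.mpr ⟨hg, ⟨v', hv'⟩⟩)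
    exact ⟨w, hw, by simp [LinearMap.comp_apply, hwg, hgx]⟩
end

section
/- Let f₁ : F → G and f₂ : G → H be continuously controlled homomorphisms with f₃ = f₂ ∘ f₁. If f₂ and f₃ are continuously bicontrolled and f₂ is injective, then f₁ is continuously bicontrolled; if f₃ is only continuously controlled, then f₁ is continuously controlled. -/
open Set Topology

variable {X : Type*} [MetricSpace X] [CompactSpace X] {R : Type*} [Ring R]

section Aux

variable {X' : Type*} [TopologicalSpace X'] {R' : Type*} [Ring R']
  {V₁ V₂ V₃ : Type*} [AddCommGroup V₁] [Module R' V₁] [AddCommGroup V₂] [Module R' V₂]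
  [AddCommGroup V₃] [Module R' V₃]

lemma ctrlPair_anti {M : Set X'} {𝓕 : Set X' → Submodule R' V₁}
    {𝓖 : Set X' → Submodule R' V₂} {f : V₁ →ₗ[R'] V₂}
    (h𝓕 : ∀ ⦃S T : Set X'⦄, S ⊆ T → 𝓕 S ≤ 𝓕 T)
    (h𝓖 : ∀ ⦃S T : Set X'⦄, S ⊆ T → 𝓖 S ≤ 𝓖 T)
    {V' V'' U : Set X'} (hsub : V'' ⊆ V') (h : CtrlPair M 𝓕 𝓖 f V' U) :
    CtrlPair M 𝓕 𝓖 f V'' U := by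
  refine ⟨h.1.trans (h𝓖 (diff_subset_diff_right hsub)), ?_⟩
  exact (Submodule.map_mono (h𝓕 (inter_subset_inter_left _ hsub))).trans h.2

lemma biCtrlPair_anti {M : Set X'} {𝓕 : Set X' → Submodule R' V₁}
    {𝓖 : Set X' → Submodule R' V₂} {f : V₁ →ₗ[R'] V₂}
    (h𝓕 : ∀ ⦃S T : Set X'⦄, S ⊆ T → 𝓕 S ≤ 𝓕 T)
    (h𝓖 : ∀ ⦃S T : Set X'⦄, S ⊆ T → 𝓖 S ≤ 𝓖 T)
    {V' V'' U : Set X'} (hsub : V'' ⊆ V') (h : BiCtrlPair M 𝓕 𝓖 f V' U) :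
    BiCtrlPair M 𝓕 𝓖 f V'' U := by
  refine ⟨ctrlPair_anti h𝓕 h𝓖 hsub h.1,
    h.2.1.trans (Submodule.map_mono (h𝓕 (diff_subset_diff_right hsub))), ?_⟩
  exact (inf_le_inf_right _ (h𝓖 (inter_subset_inter_left _ hsub))).trans h.2.2

/-- Key algebraic lemma: conditions (1),(2) for `f₁` from bicontrol pairs of `f₂`
and a control pair of `f₃ = f₂ ∘ f₁`. -/
lemma key_ctrl {M : Set X'} {𝓕 : Set X' → Submodule R' V₁}
    {𝓖 : Set X' → Submodule R' V₂} {𝓗 : Set X' → Submodule R' V₃}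
    {f₁ : V₁ →ₗ[R'] V₂} {f₂ : V₂ →ₗ[R'] V₃}
    (h𝓕 : ∀ ⦃S T : Set X'⦄, S ⊆ T → 𝓕 S ≤ 𝓕 T)
    (hi₂ : Function.Injective f₂)
    {U W V V' : Set X'} (hWU : W ⊆ U) (hV'V : V' ⊆ V)
    (hW : BiCtrlPair M 𝓖 𝓗 f₂ W U) (hV' : BiCtrlPair M 𝓖 𝓗 f₂ V' V)
    (hV : CtrlPair M 𝓕 𝓗 (f₂ ∘ₗ f₁) V W) :
    CtrlPair M 𝓕 𝓖 f₁ V' U := by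
  constructor
  · rintro y ⟨x, hx, rfl⟩
    have hx' : x ∈ 𝓕 (M \ W) := h𝓕 (diff_subset_diff_right hWU) hx
    have h3 : f₂ (f₁ x) ∈ 𝓗 (M \ V) := hV.1 ⟨x, hx', rfl⟩
    obtain ⟨g, hg, hgeq⟩ := hV'.2.1 ⟨h3, ⟨f₁ x, rfl⟩⟩
    exact hi₂ hgeq ▸ hg
  · rintro y ⟨x, hx, rfl⟩
    have hx' : x ∈ 𝓕 (V ∩ M) := h𝓕 (inter_subset_inter_left _ hV'V) hx
    have h3 : f₂ (f₁ x) ∈ 𝓗 (W ∩ M) := hV.2 ⟨x, hx', rfl⟩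
    obtain ⟨g, hg, hgeq⟩ := hW.2.2 ⟨h3, ⟨f₁ x, rfl⟩⟩
    exact hi₂ hgeq ▸ hg

lemma key_bictrl {M : Set X'} {𝓕 : Set X' → Submodule R' V₁}
    {𝓖 : Set X' → Submodule R' V₂} {𝓗 : Set X' → Submodule R' V₃}
    {f₁ : V₁ →ₗ[R'] V₂} {f₂ : V₂ →ₗ[R'] V₃}
    (h𝓕 : ∀ ⦃S T : Set X'⦄, S ⊆ T → 𝓕 S ≤ 𝓕 T)
    (hi₂ : Function.Injective f₂)
    {U W V V' : Set X'} (hWU : W ⊆ U) (hV'V : V' ⊆ V)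
    (hW : BiCtrlPair M 𝓖 𝓗 f₂ W U) (hV' : BiCtrlPair M 𝓖 𝓗 f₂ V' V)
    (hV : BiCtrlPair M 𝓕 𝓗 (f₂ ∘ₗ f₁) V W) :
    BiCtrlPair M 𝓕 𝓖 f₁ V' U := by
  refine ⟨key_ctrl h𝓕 hi₂ hWU hV'V hW hV' hV.1, ?_, ?_⟩
  · rintro y ⟨hy, x, rfl⟩
    have h1 : f₂ (f₁ x) ∈ 𝓗 (M \ W) := hW.1.1 ⟨f₁ x, hy, rfl⟩
    obtain ⟨x', hx', heq⟩ := hV.2.1 ⟨h1, ⟨x, rfl⟩⟩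
    have : f₁ x' = f₁ x := hi₂ heq
    exact ⟨x', h𝓕 (diff_subset_diff_right hV'V) hx', this⟩
  · rintro y ⟨hy, x, rfl⟩
    have h1 : f₂ (f₁ x) ∈ 𝓗 (V ∩ M) := hV'.1.2 ⟨f₁ x, hy, rfl⟩
    obtain ⟨x', hx', heq⟩ := hV.2.2 ⟨h1, ⟨x, rfl⟩⟩
    exact ⟨x', h𝓕 (inter_subset_inter_left _ hWU) hx', hi₂ heq⟩

end Aux

/-- if `f₂` is a continuously bicontrolled injection, then: `f₁` is
continuously bicontrolled whenever `f₃ = f₂ ∘ f₁` is, and `f₁` is continuously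
controlled whenever `f₃` is. -/
theorem bicontrolled_of_comp_right
    {V₁ V₂ V₃ : Type*} [AddCommGroup V₁] [Module R V₁] [AddCommGroup V₂] [Module R V₂]
    [AddCommGroup V₃] [Module R V₃]
    {M : Set X} (hM : IsOpen M) (hdense : Dense M)
    (F : FilteredModule R V₁ M) (G : FilteredModule R V₂ M) (H : FilteredModule R V₃ M)
    (f₁ : V₁ →ₗ[R] V₂) (f₂ : V₂ →ₗ[R] V₃)
    (hc₁ : Controlled M F.F G.F f₁) (hc₂ : Controlled M G.F H.F f₂)
    (hb₂ : Bicontrolled M G.F H.F f₂) (hi₂ : Function.Injective f₂) :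
    (Bicontrolled M F.F H.F (f₂ ∘ₗ f₁) → Bicontrolled M F.F G.F f₁) ∧
      (Controlled M F.F H.F (f₂ ∘ₗ f₁) → Controlled M F.F G.F f₁) := by
  constructor
  · intro hb₃ T hT U hUo hTU
    obtain ⟨W₀, hW₀o, hTW₀, hW₀⟩ := hb₂ T hT U hUo hTU
    have hW : BiCtrlPair M G.F H.F f₂ (W₀ ∩ U) U :=
      biCtrlPair_anti G.mono H.mono inter_subset_left hW₀
    obtain ⟨V₀, hV₀o, hTV₀, hV₀⟩ := hb₃ T hT (W₀ ∩ U) (hW₀o.inter hUo) (subset_inter hTW₀ hTU)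
    have hV : BiCtrlPair M F.F H.F (f₂ ∘ₗ f₁) (V₀ ∩ (W₀ ∩ U)) (W₀ ∩ U) :=
      biCtrlPair_anti F.mono H.mono inter_subset_left hV₀
    have hVo : IsOpen (V₀ ∩ (W₀ ∩ U)) := hV₀o.inter (hW₀o.inter hUo)
    have hTV : T ⊆ V₀ ∩ (W₀ ∩ U) := subset_inter hTV₀ (subset_inter hTW₀ hTU)
    obtain ⟨V₁', hV₁'o, hTV₁', hV₁'⟩ := hb₂ T hT _ hVo hTV
    refine ⟨V₁' ∩ (V₀ ∩ (W₀ ∩ U)), hV₁'o.inter hVo, subset_inter hTV₁' hTV, ?_⟩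
    exact key_bictrl F.mono hi₂ inter_subset_right inter_subset_right hW
      (biCtrlPair_anti G.mono H.mono inter_subset_left hV₁') hV
  · intro hc₃ T hT U hUo hTU
    obtain ⟨W₀, hW₀o, hTW₀, hW₀⟩ := hb₂ T hT U hUo hTU
    have hW : BiCtrlPair M G.F H.F f₂ (W₀ ∩ U) U :=
      biCtrlPair_anti G.mono H.mono inter_subset_left hW₀
    obtain ⟨V₀, hV₀o, hTV₀, hV₀⟩ := hc₃ T hT (W₀ ∩ U) (hW₀o.inter hUo) (subset_inter hTW₀ hTU)
    have hV : CtrlPair M F.F H.F (f₂ ∘ₗ f₁) (V₀ ∩ (W₀ ∩ U)) (W₀ ∩ U) :=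
      ctrlPair_anti F.mono H.mono inter_subset_left hV₀
    have hVo : IsOpen (V₀ ∩ (W₀ ∩ U)) := hV₀o.inter (hW₀o.inter hUo)
    have hTV : T ⊆ V₀ ∩ (W₀ ∩ U) := subset_inter hTV₀ (subset_inter hTW₀ hTU)
    obtain ⟨V₁', hV₁'o, hTV₁', hV₁'⟩ := hb₂ T hT _ hVo hTV
    refine ⟨V₁' ∩ (V₀ ∩ (W₀ ∩ U)), hV₁'o.inter hVo, subset_inter hTV₁' hTV, ?_⟩
    exact key_ctrl F.mono hi₂ inter_subset_right inter_subset_right hW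
      (biCtrlPair_anti G.mono H.mono inter_subset_left hV₁') hV
end

section
/- Let f : F → G be a continuously bicontrolled homomorphism of M-filtered modules, T ⊆ Y, and H a submodule of im(f) with supp(H) ⊆ T. Then there exists a submodule P of F(M) with supp(P) ⊆ T and H ⊆ f(P). -/
open Set Topology

variable {X : Type*} [MetricSpace X] [CompactSpace X] {R : Type*} [Ring R]

/-- Lemma GGGGG (b): a submodule of the image of a continuously
bicontrolled homomorphism supported near `T` lifts to a submodule of the source
supported near `T`. -/
theorem suppNear_lift
    {V W : Type*} [AddCommGroup V] [Module R V] [AddCommGroup W] [Module R W]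
    {M : Set X} (hM : IsOpen M) (hdense : Dense M)
    (F : FilteredModule R V M) (G : FilteredModule R W M) (f : V →ₗ[R] W)
    (hf : Bicontrolled M F.F G.F f)
    (T : Set X) (hT : T ⊆ Mᶜ) (H : Submodule R W)
    (hHr : H ≤ LinearMap.range f) (hH : SuppNear M G.F H T) :
    ∃ P : Submodule R V, SuppNear M F.F P T ∧ H ≤ P.map f := by
  obtain ⟨C, hC, hHC, hCT⟩ := hH
  obtain ⟨V', hV'o, hTV', _, h3, _⟩ :=
    hf (Cᶜ ∩ Mᶜ) ⟨Cᶜ, hC.isOpen_compl, rfl⟩ Cᶜ hC.isOpen_compl Set.inter_subset_left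
  refine ⟨F.F (M \ V'),
    ⟨V'ᶜ, hV'o.isClosed_compl, F.mono (by intro x hx; exact ⟨hx.2, hx.1⟩), ?_⟩, ?_⟩
  · intro x hx
    have hxC : x ∈ C := by
      by_contra h
      exact hx.1 (hTV' ⟨h, hx.2⟩)
    exact hCT ⟨hxC, hx.2⟩
  · intro w hw
    refine h3 ⟨?_, hHr hw⟩
    exact G.mono (by intro x hx; exact ⟨hx.2, fun h => h hx.1⟩) (hHC hw)
end

section
/- Let 0 → E' →^f E →^g E'' → 0 be a short exact sequence of M-filtered modules in which f and g are continuously bicontrolled. If E' and E'' are insular at infinity, then E is insular at infinity. -/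
open Set Topology

section AuxInsular

variable {X : Type*} [TopologicalSpace X] {R V W : Type*} [Ring R]
  [AddCommGroup V] [Module R V] [AddCommGroup W] [Module R W]

/-- Forward image lemma: if `f` is continuously controlled and `H` is supported
near `T`, then `f(H)` is supported near `T`. -/
lemma aux_suppNear_map {M : Set X} {F : Set X → Submodule R V} {G : Set X → Submodule R W}
    {f : V →ₗ[R] W} (hf : Controlled M F G f) {H : Submodule R V} {T : Set X}
    (h : SuppNear M F H T) : SuppNear M G (H.map f) T := by
  obtain ⟨C, hC, hHC, hCT⟩ := h
  obtain ⟨V', hV'o, hTV', hpair⟩ :=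
    hf (Cᶜ ∩ Mᶜ) ⟨Cᶜ, hC.isOpen_compl, rfl⟩ Cᶜ hC.isOpen_compl inter_subset_left
  refine ⟨V'ᶜ, hV'o.isClosed_compl, ?_, ?_⟩
  · have h1 := hpair.1
    have e1 : M \ Cᶜ = C ∩ M := by rw [diff_compl, inter_comm]
    have e2 : M \ V' = V'ᶜ ∩ M := by rw [diff_eq, inter_comm]
    rw [e1, e2] at h1
    exact le_trans (Submodule.map_mono hHC) h1
  · intro x hx
    rcases hx with ⟨hxV, hxM⟩
    by_cases hxC : x ∈ C
    · exact hCT ⟨hxC, hxM⟩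
    · exact absurd (hTV' ⟨hxC, hxM⟩) hxV

/-- Backward lemma: if `f` is injective and continuously bicontrolled, and
`K ≤ range f` is supported near `T`, then `f⁻¹(K)` is supported near `T`. -/
lemma aux_suppNear_comap {M : Set X} {F : Set X → Submodule R V} {G : Set X → Submodule R W}
    {f : V →ₗ[R] W} (hf : Bicontrolled M F G f) (hfi : Function.Injective f)
    {K : Submodule R W} {T : Set X} (hKr : K ≤ LinearMap.range f)
    (h : SuppNear M G K T) : SuppNear M F (K.comap f) T := by
  obtain ⟨C, hC, hKC, hCT⟩ := h
  obtain ⟨V', hV'o, hTV', hpair⟩ :=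
    hf (Cᶜ ∩ Mᶜ) ⟨Cᶜ, hC.isOpen_compl, rfl⟩ Cᶜ hC.isOpen_compl inter_subset_left
  have h3 := hpair.2.1
  have e1 : M \ Cᶜ = C ∩ M := by rw [diff_compl, inter_comm]
  have e2 : M \ V' = V'ᶜ ∩ M := by rw [diff_eq, inter_comm]
  rw [e1, e2] at h3
  have hK : K ≤ (F (V'ᶜ ∩ M)).map f := le_trans (le_inf hKC hKr) h3
  refine ⟨V'ᶜ, hV'o.isClosed_compl, ?_, ?_⟩
  · have := Submodule.comap_mono (f := f) hK
    rwa [Submodule.comap_map_eq_of_injective hfi] at this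
  · intro x hx
    rcases hx with ⟨hxV, hxM⟩
    by_cases hxC : x ∈ C
    · exact hCT ⟨hxC, hxM⟩
    · exact absurd (hTV' ⟨hxC, hxM⟩) hxV

/-- Lifting lemma: if `g` is surjective and continuously bicontrolled, and `K` is
supported near `T`, then `K` is contained in the image of a submodule supported
near `T`. -/
lemma aux_suppNear_lift {M : Set X} {F : Set X → Submodule R V} {G : Set X → Submodule R W}
    {g : V →ₗ[R] W} (hg : Bicontrolled M F G g) (hgs : Function.Surjective g)
    {K : Submodule R W} {T : Set X} (h : SuppNear M G K T) :
    ∃ P : Submodule R V, SuppNear M F P T ∧ K ≤ P.map g := by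
  obtain ⟨C, hC, hKC, hCT⟩ := h
  obtain ⟨V', hV'o, hTV', hpair⟩ :=
    hg (Cᶜ ∩ Mᶜ) ⟨Cᶜ, hC.isOpen_compl, rfl⟩ Cᶜ hC.isOpen_compl inter_subset_left
  have h3 := hpair.2.1
  have e1 : M \ Cᶜ = C ∩ M := by rw [diff_compl, inter_comm]
  have e2 : M \ V' = V'ᶜ ∩ M := by rw [diff_eq, inter_comm]
  rw [e1, e2] at h3
  have hrange : LinearMap.range g = ⊤ := LinearMap.range_eq_top.2 hgs
  refine ⟨F (V'ᶜ ∩ M), ⟨V'ᶜ, hV'o.isClosed_compl, le_rfl, ?_⟩, ?_⟩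
  · intro x hx
    rcases hx with ⟨hxV, hxM⟩
    by_cases hxC : x ∈ C
    · exact hCT ⟨hxC, hxM⟩
    · exact absurd (hTV' ⟨hxC, hxM⟩) hxV
  · refine le_trans (le_inf hKC ?_) h3
    rw [hrange]; exact le_top

lemma aux_suppNear_sup {M : Set X} {F : Set X → Submodule R V}
    (hmono : ∀ ⦃S T : Set X⦄, S ⊆ T → F S ≤ F T)
    {H₁ H₂ : Submodule R V} {T₁ T₂ : Set X}
    (h₁ : SuppNear M F H₁ T₁) (h₂ : SuppNear M F H₂ T₂) :
    SuppNear M F (H₁ ⊔ H₂) (T₁ ∪ T₂) := by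
  obtain ⟨C₁, hC₁, hH₁, hT₁⟩ := h₁
  obtain ⟨C₂, hC₂, hH₂, hT₂⟩ := h₂
  refine ⟨C₁ ∪ C₂, hC₁.union hC₂, sup_le ?_ ?_, ?_⟩
  · exact le_trans hH₁ (hmono (inter_subset_inter_left _ subset_union_left))
  · exact le_trans hH₂ (hmono (inter_subset_inter_left _ subset_union_right))
  · rw [union_inter_distrib_right]
    exact union_subset_union hT₁ hT₂

lemma aux_suppNear_mono {M : Set X} {F : Set X → Submodule R V}
    {H H' : Submodule R V} {T T' : Set X} (hH : H' ≤ H) (hT : T ⊆ T')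
    (h : SuppNear M F H T) : SuppNear M F H' T' := by
  obtain ⟨C, hC, h1, h2⟩ := h
  exact ⟨C, hC, le_trans hH h1, h2.trans hT⟩

lemma aux_controlled_of_bicontrolled {M : Set X} {F : Set X → Submodule R V}
    {G : Set X → Submodule R W} {f : V →ₗ[R] W} (h : Bicontrolled M F G f) :
    Controlled M F G f := by
  intro T hT U hU hTU
  obtain ⟨V', a, b, c⟩ := h T hT U hU hTU
  exact ⟨V', a, b, c.1⟩

end AuxInsular

variable {X : Type*} [MetricSpace X] [CompactSpace X] {R : Type*} [Ring R]

/-- insular-at-infinity objects are closed under exact extensions. -/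
theorem insular_extension
    {V₁ V₂ V₃ : Type*} [AddCommGroup V₁] [Module R V₁] [AddCommGroup V₂] [Module R V₂]
    [AddCommGroup V₃] [Module R V₃]
    {M : Set X} (hM : IsOpen M) (hdense : Dense M)
    (E' : FilteredModule R V₁ M) (E : FilteredModule R V₂ M) (E'' : FilteredModule R V₃ M)
    (f : V₁ →ₗ[R] V₂) (g : V₂ →ₗ[R] V₃)
    (hfi : Function.Injective f) (hgs : Function.Surjective g)
    (hex : LinearMap.range f = LinearMap.ker g)
    (hbf : Bicontrolled M E'.F E.F f) (hbg : Bicontrolled M E.F E''.F g)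
    (h1 : InsularAtInfinity M E'.F) (h2 : InsularAtInfinity M E''.F) :
    InsularAtInfinity M E.F := by
  intro T₁ T₂ hT₁ hT₂ H hs₁ hs₂
  have hcg : Controlled M E.F E''.F g := aux_controlled_of_bicontrolled hbg
  have hcf : Controlled M E'.F E.F f := aux_controlled_of_bicontrolled hbf
  -- g(H) is supported near T₁ and T₂, hence near T₁ ∩ T₂ by insularity of E''
  have hgH : SuppNear M E''.F (H.map g) (T₁ ∩ T₂) :=
    h2 T₁ T₂ hT₁ hT₂ (H.map g) (aux_suppNear_map hcg hs₁) (aux_suppNear_map hcg hs₂)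
  -- lift: H.map g ≤ P.map g for some P supported near T₁ ∩ T₂
  obtain ⟨P, hP, hHP⟩ := aux_suppNear_lift hbg hgs hgH
  -- the kernel correction term
  set K : Submodule R V₂ := LinearMap.ker g ⊓ (H ⊔ P) with hKdef
  have hHPK : H ≤ P ⊔ K := by
    intro h hh
    obtain ⟨p, hp, hgp⟩ := hHP (Submodule.mem_map_of_mem hh)
    have hk : h - p ∈ K := by
      refine ⟨?_, ?_⟩
      · have : g (h - p) = 0 := by rw [map_sub, hgp, sub_self]
        exact LinearMap.mem_ker.2 this
      · exact Submodule.sub_mem _ (Submodule.mem_sup_left hh) (Submodule.mem_sup_right hp)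
    have : h = p + (h - p) := by abel
    rw [this]
    exact Submodule.add_mem _ (Submodule.mem_sup_left hp) (Submodule.mem_sup_right hk)
  have hKr : K ≤ LinearMap.range f := by
    rw [hex]; exact inf_le_left
  -- K is supported near T₁ and near T₂ (in E)
  have hK₁ : SuppNear M E.F K T₁ := by
    have := aux_suppNear_sup E.mono hs₁ hP
    exact aux_suppNear_mono (le_trans inf_le_right le_rfl)
      (union_subset subset_rfl inter_subset_left) this
  have hK₂ : SuppNear M E.F K T₂ := by
    have := aux_suppNear_sup E.mono hs₂ hP
    exact aux_suppNear_mono (le_trans inf_le_right le_rfl)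
      (union_subset subset_rfl inter_subset_right) this
  -- pull K back along f; use insularity of E'
  have hK' : SuppNear M E'.F (K.comap f) (T₁ ∩ T₂) :=
    h1 T₁ T₂ hT₁ hT₂ (K.comap f)
      (aux_suppNear_comap hbf hfi hKr hK₁) (aux_suppNear_comap hbf hfi hKr hK₂)
  -- push forward again
  have hKmap : SuppNear M E.F ((K.comap f).map f) (T₁ ∩ T₂) := aux_suppNear_map hcf hK'
  have hKle : K ≤ (K.comap f).map f := by
    rw [Submodule.map_comap_eq]
    exact le_inf hKr le_rfl
  -- conclude
  have final := aux_suppNear_sup E.mono hP hKmap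
  refine aux_suppNear_mono ?_ (union_self _).subset final
  exact le_trans hHPK (sup_le le_sup_left (le_trans hKle le_sup_right))
end

section
/- Let 0 → E' →^f E →^g E'' → 0 be a short exact sequence of M-filtered modules with f, g continuously bicontrolled. If E is insular at infinity, then E' is insular at infinity. -/
open Set Topology

variable {X : Type*} [MetricSpace X] [CompactSpace X] {R : Type*} [Ring R]

/-- if the middle term of an exact sequence is insular at infinity,
so is the subobject. -/
theorem insular_sub
    {V₁ V₂ V₃ : Type*} [AddCommGroup V₁] [Module R V₁] [AddCommGroup V₂] [Module R V₂]
    [AddCommGroup V₃] [Module R V₃]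
    {M : Set X} (hM : IsOpen M) (hdense : Dense M)
    (E' : FilteredModule R V₁ M) (E : FilteredModule R V₂ M) (E'' : FilteredModule R V₃ M)
    (f : V₁ →ₗ[R] V₂) (g : V₂ →ₗ[R] V₃)
    (hfi : Function.Injective f) (hgs : Function.Surjective g)
    (hex : LinearMap.range f = LinearMap.ker g)
    (hbf : Bicontrolled M E'.F E.F f) (hbg : Bicontrolled M E.F E''.F g)
    (h : InsularAtInfinity M E.F) :
    InsularAtInfinity M E'.F := by
  intro T₁ T₂ hT₁ hT₂ H h1 h2
  -- forward transfer: support of H transfers exactly to support of H.map f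
  have fwd : ∀ T : Set X, T ⊆ Mᶜ → SuppNear M E'.F H T → SuppNear M E.F (H.map f) T := by
    intro T hTM ⟨C, hC, hHC, hCT⟩
    obtain ⟨V', hV'o, hTV', hbi⟩ :=
      hbf (Cᶜ ∩ Mᶜ) ⟨Cᶜ, hC.isOpen_compl, rfl⟩ Cᶜ hC.isOpen_compl Set.inter_subset_left
    refine ⟨V'ᶜ, hV'o.isClosed_compl, ?_, ?_⟩
    · have key : (E'.F (M \ Cᶜ)).map f ≤ E.F (M \ V') := hbi.1.1
      have hsub : H ≤ E'.F (M \ Cᶜ) := by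
        rw [Set.diff_compl]
        exact hHC.trans (E'.mono (by rw [Set.inter_comm]))
      refine (Submodule.map_mono hsub).trans (key.trans (E.mono ?_))
      rw [Set.diff_eq, Set.inter_comm]
    · intro x hx
      by_cases hxC : x ∈ C
      · exact hCT ⟨hxC, hx.2⟩
      · exact absurd (hTV' ⟨hxC, hx.2⟩) hx.1
  have hf1 := fwd T₁ hT₁ h1
  have hf2 := fwd T₂ hT₂ h2
  obtain ⟨D, hD, hHD, hDT⟩ := h T₁ T₂ hT₁ hT₂ (H.map f) hf1 hf2
  -- backward transfer
  obtain ⟨V', hV'o, hTV', hbi⟩ :=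
    hbf (Dᶜ ∩ Mᶜ) ⟨Dᶜ, hD.isOpen_compl, rfl⟩ Dᶜ hD.isOpen_compl Set.inter_subset_left
  have key : E.F (M \ Dᶜ) ⊓ LinearMap.range f ≤ (E'.F (M \ V')).map f := hbi.2.1
  have hmap : H.map f ≤ (E'.F (M \ V')).map f := by
    refine le_trans (le_inf ?_ ?_) key
    · rw [Set.diff_compl]
      exact hHD.trans (E.mono (by rw [Set.inter_comm]))
    · rintro _ ⟨x, -, rfl⟩; exact ⟨x, rfl⟩
  have hH : H ≤ E'.F (M \ V') := by
    intro x hx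
    obtain ⟨y, hy, hyx⟩ := hmap ⟨x, hx, rfl⟩
    exact hfi hyx ▸ hy
  refine ⟨V'ᶜ, hV'o.isClosed_compl, ?_, ?_⟩
  · exact hH.trans (E'.mono (by rw [Set.diff_eq, Set.inter_comm]))
  · intro x hx
    have hxD : x ∈ D := by
      by_contra hxD
      exact hx.1 (hTV' ⟨hxD, hx.2⟩)
    exact hDT ⟨hxD, hx.2⟩
end

section
/- Let 0 → E' →^f E →^g E'' → 0 be a short exact sequence of M-filtered modules with f, g continuously bicontrolled. If E' and E'' are split at infinity, then E is split at infinity. -/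
open Set Topology

variable {X : Type*} [MetricSpace X] [CompactSpace X] {R : Type*} [Ring R]

section Aux

variable {X : Type*} [TopologicalSpace X] {R V W : Type*} [Ring R]
  [AddCommGroup V] [Module R V] [AddCommGroup W] [Module R W]

/-- Forward support: a bicontrolled map sends a module supported on a closed set `C`
into a module supported on a closed set with boundary part inside that of `C`. -/
lemma fwd_supp {M : Set X} {𝓕 : Set X → Submodule R V} {𝓖 : Set X → Submodule R W}
    {f : V →ₗ[R] W} (hb : Bicontrolled M 𝓕 𝓖 f) {C : Set X} (hC : IsClosed C) :
    ∃ C' : Set X, IsClosed C' ∧ (𝓕 (C ∩ M)).map f ≤ 𝓖 (C' ∩ M) ∧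
      C' ∩ Mᶜ ⊆ C ∩ Mᶜ := by
  obtain ⟨V', hV'o, hTV', hpair⟩ :=
    hb (Cᶜ ∩ Mᶜ) ⟨Cᶜ, hC.isOpen_compl, rfl⟩ Cᶜ hC.isOpen_compl inter_subset_left
  refine ⟨V'ᶜ, hV'o.isClosed_compl, ?_, ?_⟩
  · have h1 := hpair.1.1
    have e1 : M \ Cᶜ = C ∩ M := by ext x; simp [Set.mem_diff]; tauto
    have e2 : M \ V' = V'ᶜ ∩ M := by ext x; simp [Set.mem_diff]; tauto
    rwa [e1, e2] at h1
  · intro x hx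
    rcases hx with ⟨hxV, hxM⟩
    refine ⟨?_, hxM⟩
    by_contra hxC
    exact hxV (hTV' ⟨hxC, hxM⟩)

/-- Lifting support: given a bicontrolled map and a closed set `D`, elements of
`𝓖 (D ∩ M)` in the range of `f` lift to elements supported on a closed set with
boundary part inside that of `D`. -/
lemma lift_supp {M : Set X} {𝓕 : Set X → Submodule R V} {𝓖 : Set X → Submodule R W}
    {f : V →ₗ[R] W} (hb : Bicontrolled M 𝓕 𝓖 f) {D : Set X} (hD : IsClosed D) :
    ∃ C' : Set X, IsClosed C' ∧ C' ∩ Mᶜ ⊆ D ∩ Mᶜ ∧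
      𝓖 (D ∩ M) ⊓ LinearMap.range f ≤ (𝓕 (C' ∩ M)).map f := by
  obtain ⟨V', hV'o, hTV', hpair⟩ :=
    hb (Dᶜ ∩ Mᶜ) ⟨Dᶜ, hD.isOpen_compl, rfl⟩ Dᶜ hD.isOpen_compl inter_subset_left
  refine ⟨V'ᶜ, hV'o.isClosed_compl, ?_, ?_⟩
  · intro x hx
    rcases hx with ⟨hxV, hxM⟩
    refine ⟨?_, hxM⟩
    by_contra hxD
    exact hxV (hTV' ⟨hxD, hxM⟩)
  · have h3 := hpair.2.1
    have e1 : M \ Dᶜ = D ∩ M := by ext x; simp [Set.mem_diff]; tauto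
    have e2 : M \ V' = V'ᶜ ∩ M := by ext x; simp [Set.mem_diff]; tauto
    rwa [e1, e2] at h3

end Aux

/-- split-at-infinity objects are closed under exact extensions. -/
theorem split_extension
    {V₁ V₂ V₃ : Type*} [AddCommGroup V₁] [Module R V₁] [AddCommGroup V₂] [Module R V₂]
    [AddCommGroup V₃] [Module R V₃]
    {M : Set X} (hM : IsOpen M) (hdense : Dense M)
    (E' : FilteredModule R V₁ M) (E : FilteredModule R V₂ M) (E'' : FilteredModule R V₃ M)
    (f : V₁ →ₗ[R] V₂) (g : V₂ →ₗ[R] V₃)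
    (hfi : Function.Injective f) (hgs : Function.Surjective g)
    (hex : LinearMap.range f = LinearMap.ker g)
    (hbf : Bicontrolled M E'.F E.F f) (hbg : Bicontrolled M E.F E''.F g)
    (h1 : SplitAtInfinity M E'.F) (h2 : SplitAtInfinity M E''.F) :
    SplitAtInfinity M E.F := by
  intro U₁ U₂ hU₁ hU₂ H hH
  obtain ⟨C, hCcl, hHC, hCb⟩ := hH
  -- Step 1: push H forward to E''
  obtain ⟨C', hC'cl, hmapC, hC'b⟩ := fwd_supp hbg hCcl
  have hgH : SuppNear M E''.F (H.map g) (U₁ ∪ U₂) :=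
    ⟨C', hC'cl, le_trans (Submodule.map_mono hHC) hmapC, hC'b.trans hCb⟩
  obtain ⟨K₁, K₂, hK, ⟨D₁, hD₁cl, hKD₁, hD₁b⟩, ⟨D₂, hD₂cl, hKD₂, hD₂b⟩⟩ :=
    h2 U₁ U₂ hU₁ hU₂ (H.map g) hgH
  -- Step 2: lift K₁, K₂ back to E
  obtain ⟨A₁, hA₁cl, hA₁b, hlift₁⟩ := lift_supp hbg hD₁cl
  obtain ⟨A₂, hA₂cl, hA₂b, hlift₂⟩ := lift_supp hbg hD₂cl
  set L₁ : Submodule R V₂ := K₁.comap g ⊓ E.F (A₁ ∩ M) with hL₁def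
  set L₂ : Submodule R V₂ := K₂.comap g ⊓ E.F (A₂ ∩ M) with hL₂def
  have hgL₁ : K₁ ≤ L₁.map g := by
    intro k hk
    obtain ⟨a, ha, rfl⟩ := hlift₁ ⟨hKD₁ hk, hgs _⟩
    exact ⟨a, ⟨hk, ha⟩, rfl⟩
  have hgL₂ : K₂ ≤ L₂.map g := by
    intro k hk
    obtain ⟨a, ha, rfl⟩ := hlift₂ ⟨hKD₂ hk, hgs _⟩
    exact ⟨a, ⟨hk, ha⟩, rfl⟩
  -- the error submodule N, inside ker g = range f
  set D : Set X := C ∪ (A₁ ∪ A₂) with hDdef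
  have hDcl : IsClosed D := hCcl.union (hA₁cl.union hA₂cl)
  have hDb : D ∩ Mᶜ ⊆ U₁ ∪ U₂ := by
    rintro x ⟨hxD, hxM⟩
    rcases hxD with hx | hx | hx
    · exact hCb ⟨hx, hxM⟩
    · exact Or.inl (hD₁b (hA₁b ⟨hx, hxM⟩))
    · exact Or.inr (hD₂b (hA₂b ⟨hx, hxM⟩))
  set N : Submodule R V₂ := (H ⊔ (L₁ ⊔ L₂)) ⊓ LinearMap.range f with hNdef
  have hND : N ≤ E.F (D ∩ M) := by
    refine le_trans inf_le_left (sup_le (le_trans hHC ?_) (sup_le ?_ ?_))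
    · exact E.mono (inter_subset_inter_left M subset_union_left)
    · exact le_trans inf_le_right
        (E.mono (inter_subset_inter_left M (subset_union_left.trans subset_union_right)))
    · exact le_trans inf_le_right
        (E.mono (inter_subset_inter_left M (subset_union_right.trans subset_union_right)))
  -- pull N back through f
  obtain ⟨B, hBcl, hBb, hliftf⟩ := lift_supp hbf hDcl
  set N' : Submodule R V₁ := N.comap f with hN'def
  have hN'B : N' ≤ E'.F (B ∩ M) := by
    intro a ha
    have : f a ∈ (E'.F (B ∩ M)).map f := hliftf ⟨hND ha, a, rfl⟩
    obtain ⟨a', ha', haa⟩ := this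
    rwa [← hfi haa]
  have hN'supp : SuppNear M E'.F N' (U₁ ∪ U₂) := ⟨B, hBcl, hN'B, hBb.trans hDb⟩
  obtain ⟨P₁, P₂, hP, ⟨Q₁, hQ₁cl, hPQ₁, hQ₁b⟩, ⟨Q₂, hQ₂cl, hPQ₂, hQ₂b⟩⟩ :=
    h1 U₁ U₂ hU₁ hU₂ N' hN'supp
  -- push P₁, P₂ forward by f
  obtain ⟨Q₁', hQ₁'cl, hmapQ₁, hQ₁'b⟩ := fwd_supp hbf hQ₁cl
  obtain ⟨Q₂', hQ₂'cl, hmapQ₂, hQ₂'b⟩ := fwd_supp hbf hQ₂cl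
  refine ⟨L₁ ⊔ P₁.map f, L₂ ⊔ P₂.map f, ?_, ?_, ?_⟩
  · -- H ≤ (L₁ ⊔ f(P₁)) ⊔ (L₂ ⊔ f(P₂))
    intro h hh
    have : g h ∈ (L₁ ⊔ L₂).map g := by
      rw [Submodule.map_sup]
      exact sup_le_sup hgL₁ hgL₂ (hK ⟨h, hh, rfl⟩)
    obtain ⟨l, hl, hgl⟩ := this
    have hker : h - l ∈ LinearMap.range f := by
      rw [hex, LinearMap.mem_ker, map_sub, hgl, sub_self]
    have hN : h - l ∈ N :=
      ⟨Submodule.sub_mem _ (Submodule.mem_sup_left hh) (Submodule.mem_sup_right hl), hker⟩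
    obtain ⟨n, hn⟩ := hker
    have hnN' : n ∈ N' := by
      show f n ∈ N
      rw [hn]; exact hN
    obtain ⟨p₁, hp₁, p₂, hp₂, hpsum⟩ := Submodule.mem_sup.mp (hP hnN')
    obtain ⟨l₁, hl₁, l₂, hl₂, hlsum⟩ := Submodule.mem_sup.mp hl
    have hsum : h = (l₁ + f p₁) + (l₂ + f p₂) := by
      have h1 : h = l + f n := by rw [hn]; abel
      rw [h1, ← hlsum, ← hpsum, map_add]; abel
    rw [hsum]
    exact Submodule.add_mem _
      (Submodule.mem_sup_left (Submodule.add_mem _ (Submodule.mem_sup_left hl₁)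
        (Submodule.mem_sup_right ⟨p₁, hp₁, rfl⟩)))
      (Submodule.mem_sup_right (Submodule.add_mem _ (Submodule.mem_sup_left hl₂)
        (Submodule.mem_sup_right ⟨p₂, hp₂, rfl⟩)))
  · refine ⟨A₁ ∪ Q₁', hA₁cl.union hQ₁'cl, ?_, ?_⟩
    · refine sup_le ?_ ?_
      · exact le_trans inf_le_right (E.mono (inter_subset_inter_left M subset_union_left))
      · exact le_trans (Submodule.map_mono hPQ₁) <| le_trans hmapQ₁ <|
          E.mono (inter_subset_inter_left M subset_union_right)
    · rintro x ⟨hx, hxM⟩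
      rcases hx with hx | hx
      · exact hD₁b (hA₁b ⟨hx, hxM⟩)
      · exact hQ₁b (hQ₁'b ⟨hx, hxM⟩)
  · refine ⟨A₂ ∪ Q₂', hA₂cl.union hQ₂'cl, ?_, ?_⟩
    · refine sup_le ?_ ?_
      · exact le_trans inf_le_right (E.mono (inter_subset_inter_left M subset_union_left))
      · exact le_trans (Submodule.map_mono hPQ₂) <| le_trans hmapQ₂ <|
          E.mono (inter_subset_inter_left M subset_union_right)
    · rintro x ⟨hx, hxM⟩
      rcases hx with hx | hx
      · exact hD₂b (hA₂b ⟨hx, hxM⟩)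
      · exact hQ₂b (hQ₂'b ⟨hx, hxM⟩)
end

section
/- Let 0 → E' →^f E →^g E'' → 0 be a short exact sequence of M-filtered modules with f, g continuously bicontrolled. If E is split at infinity, then E'' is split at infinity. -/
open Set Topology

variable {X : Type*} [MetricSpace X] [CompactSpace X] {R : Type*} [Ring R]


lemma supp_map_aux {X : Type*} [TopologicalSpace X] {R V W : Type*} [Ring R]
    [AddCommGroup V] [Module R V] [AddCommGroup W] [Module R W]
    {M : Set X} {𝓕 : Set X → Submodule R V} {𝓖 : Set X → Submodule R W}
    {g : V →ₗ[R] W} (hg : Bicontrolled M 𝓕 𝓖 g)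
    {K : Submodule R V} {T : Set X} (h : SuppNear M 𝓕 K T) :
    SuppNear M 𝓖 (K.map g) T := by
  obtain ⟨C, hC, hKC, hCT⟩ := h
  obtain ⟨V', hV', hTV', hctrl⟩ :=
    hg (Cᶜ ∩ Mᶜ) ⟨Cᶜ, hC.isOpen_compl, rfl⟩ Cᶜ hC.isOpen_compl inter_subset_left
  have hMC : M \ Cᶜ = C ∩ M := by ext x; simp [Set.mem_diff, Set.mem_inter_iff]; tauto
  have hMV : M \ V' = V'ᶜ ∩ M := by ext x; simp [Set.mem_diff]; tauto
  refine ⟨V'ᶜ, hV'.isClosed_compl, ?_, ?_⟩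
  · have h1 := hctrl.1.1
    rw [hMC, hMV] at h1
    exact (Submodule.map_mono hKC).trans h1
  · intro x hx
    have hxC : x ∈ C := by
      by_contra hxc
      exact hx.1 (hTV' ⟨hxc, hx.2⟩)
    exact hCT ⟨hxC, hx.2⟩

/-- if the middle term of an exact sequence is split at infinity,
so is the quotient. -/
theorem split_quotient
    {V₁ V₂ V₃ : Type*} [AddCommGroup V₁] [Module R V₁] [AddCommGroup V₂] [Module R V₂]
    [AddCommGroup V₃] [Module R V₃]
    {M : Set X} (hM : IsOpen M) (hdense : Dense M)
    (E' : FilteredModule R V₁ M) (E : FilteredModule R V₂ M) (E'' : FilteredModule R V₃ M)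
    (f : V₁ →ₗ[R] V₂) (g : V₂ →ₗ[R] V₃)
    (hfi : Function.Injective f) (hgs : Function.Surjective g)
    (hex : LinearMap.range f = LinearMap.ker g)
    (hbf : Bicontrolled M E'.F E.F f) (hbg : Bicontrolled M E.F E''.F g)
    (h : SplitAtInfinity M E.F) :
    SplitAtInfinity M E''.F := by
  intro U₁ U₂ hU₁ hU₂ H hsupp
  obtain ⟨C, hC, hHC, hCb⟩ := hsupp
  obtain ⟨V', hV'open, hTV', hbi⟩ :=
    hbg (Cᶜ ∩ Mᶜ) ⟨Cᶜ, hC.isOpen_compl, rfl⟩ Cᶜ hC.isOpen_compl inter_subset_left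
  have hMC : M \ Cᶜ = C ∩ M := by ext x; simp [Set.mem_diff]; tauto
  have hMV : M \ V' = V'ᶜ ∩ M := by ext x; simp [Set.mem_diff]; tauto
  have h3 := hbi.2.1
  rw [hMC, hMV] at h3
  have hrange : LinearMap.range g = ⊤ := LinearMap.range_eq_top.mpr hgs
  set K : Submodule R V₂ := E.F (V'ᶜ ∩ M) ⊓ Submodule.comap g H with hKdef
  have hHgK : H ≤ K.map g := by
    intro x hx
    have hx2 : x ∈ (E.F (V'ᶜ ∩ M)).map g := by
      refine h3 ⟨hHC hx, ?_⟩
      rw [hrange]; trivial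
    obtain ⟨y, hy, rfl⟩ := hx2
    exact ⟨y, ⟨hy, hx⟩, rfl⟩
  have hKsupp : SuppNear M E.F K (U₁ ∪ U₂) := by
    refine ⟨V'ᶜ, hV'open.isClosed_compl, inf_le_left, ?_⟩
    intro x hx
    have hxC : x ∈ C := by
      by_contra hxc
      exact hx.1 (hTV' ⟨hxc, hx.2⟩)
    exact hCb ⟨hxC, hx.2⟩
  obtain ⟨K₁, K₂, hKle, hK₁, hK₂⟩ := h U₁ U₂ hU₁ hU₂ K hKsupp
  refine ⟨K₁.map g, K₂.map g, ?_, supp_map_aux hbg hK₁, supp_map_aux hbg hK₂⟩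
  calc H ≤ K.map g := hHgK
    _ ≤ (K₁ ⊔ K₂).map g := Submodule.map_mono hKle
    _ = K₁.map g ⊔ K₂.map g := Submodule.map_sup _ _ _
end

section
/- Let 0 → E' →^f E →^g E'' → 0 be a short exact sequence of M-filtered modules with f, g continuously bicontrolled. If E is both insular at infinity and split at infinity, and E' is split at infinity, then E'' is insular at infinity. -/
open Set Topology

variable {X : Type*} [MetricSpace X] [CompactSpace X] {R : Type*} [Ring R]

/-- Exact support transfer along a bicontrolled map, obtained by applying the
control conditions (1) and (3) near the boundary-open set `Cᶜ ∩ Mᶜ` with `U = Cᶜ`. -/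
private lemma aux_transfer {X : Type*} [TopologicalSpace X] {R V W : Type*} [Ring R]
    [AddCommGroup V] [Module R V] [AddCommGroup W] [Module R W]
    {M : Set X} {𝓕 : Set X → Submodule R V} {𝓖 : Set X → Submodule R W}
    {f : V →ₗ[R] W} (hb : Bicontrolled M 𝓕 𝓖 f) {C : Set X} (hC : IsClosed C) :
    ∃ C' : Set X, IsClosed C' ∧ C' ∩ Mᶜ ⊆ C ∩ Mᶜ ∧
      (𝓕 (C ∩ M)).map f ≤ 𝓖 (C' ∩ M) ∧
      𝓖 (C ∩ M) ⊓ LinearMap.range f ≤ (𝓕 (C' ∩ M)).map f := by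
  obtain ⟨V', hV'o, hTV', ⟨⟨h1, -⟩, h3, -⟩⟩ :=
    hb (Cᶜ ∩ Mᶜ) ⟨Cᶜ, hC.isOpen_compl, rfl⟩ Cᶜ hC.isOpen_compl Set.inter_subset_left
  have e1 : M \ Cᶜ = C ∩ M := by rw [Set.diff_compl, Set.inter_comm]
  have e2 : M \ V' = V'ᶜ ∩ M := by rw [Set.diff_eq, Set.inter_comm]
  rw [e1, e2] at h1 h3
  refine ⟨V'ᶜ, hV'o.isClosed_compl, ?_, h1, h3⟩
  rintro x ⟨hx1, hx2⟩
  exact ⟨Classical.byContradiction fun h => hx1 (hTV' ⟨h, hx2⟩), hx2⟩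

/-- if `E` is insular and split at infinity and `E'` is split at
infinity, then the quotient `E''` is insular at infinity. -/
theorem insular_quotient
    {V₁ V₂ V₃ : Type*} [AddCommGroup V₁] [Module R V₁] [AddCommGroup V₂] [Module R V₂]
    [AddCommGroup V₃] [Module R V₃]
    {M : Set X} (hM : IsOpen M) (hdense : Dense M)
    (E' : FilteredModule R V₁ M) (E : FilteredModule R V₂ M) (E'' : FilteredModule R V₃ M)
    (f : V₁ →ₗ[R] V₂) (g : V₂ →ₗ[R] V₃)
    (hfi : Function.Injective f) (hgs : Function.Surjective g)
    (hex : LinearMap.range f = LinearMap.ker g)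
    (hbf : Bicontrolled M E'.F E.F f) (hbg : Bicontrolled M E.F E''.F g)
    (hEi : InsularAtInfinity M E.F) (hEs : SplitAtInfinity M E.F)
    (hE's : SplitAtInfinity M E'.F) :
    InsularAtInfinity M E''.F := by
  intro T₁ T₂ hT₁ hT₂ H'' hs₁ hs₂
  obtain ⟨C₁, hC₁c, hHC₁, hC₁T⟩ := hs₁
  obtain ⟨C₂, hC₂c, hHC₂, hC₂T⟩ := hs₂
  -- lift `H''` along `g` with exact supports
  obtain ⟨C₁', hC₁'c, hC₁'s, -, hlift₁⟩ := aux_transfer hbg hC₁c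
  obtain ⟨C₂', hC₂'c, hC₂'s, -, hlift₂⟩ := aux_transfer hbg hC₂c
  have hrg : LinearMap.range g = ⊤ := LinearMap.range_eq_top.mpr hgs
  set H₁ : Submodule R V₂ := E.F (C₁' ∩ M) ⊓ H''.comap g with hH₁def
  set H₂ : Submodule R V₂ := E.F (C₂' ∩ M) ⊓ H''.comap g with hH₂def
  have hsurj₁ : ∀ z ∈ H'', ∃ x ∈ H₁, g x = z := by
    intro z hz
    obtain ⟨x, hx, hgx⟩ := hlift₁ ⟨hHC₁ hz, by rw [hrg]; trivial⟩
    exact ⟨x, ⟨hx, by simpa [Submodule.mem_comap, hgx] using hz⟩, hgx⟩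
  have hsurj₂ : ∀ z ∈ H'', ∃ x ∈ H₂, g x = z := by
    intro z hz
    obtain ⟨x, hx, hgx⟩ := hlift₂ ⟨hHC₂ hz, by rw [hrg]; trivial⟩
    exact ⟨x, ⟨hx, by simpa [Submodule.mem_comap, hgx] using hz⟩, hgx⟩
  -- the submodule of differences of lifts, pulled back to `E'`
  have hsupsup : H₁ ⊔ H₂ ≤ E.F ((C₁' ∪ C₂') ∩ M) :=
    sup_le
      (le_trans inf_le_left
        (E.mono (Set.inter_subset_inter_left _ Set.subset_union_left)))
      (le_trans inf_le_left
        (E.mono (Set.inter_subset_inter_left _ Set.subset_union_right)))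
  obtain ⟨D, hDc, hDs, -, hliftf⟩ := aux_transfer hbf (hC₁'c.union hC₂'c)
  set L : Submodule R V₁ := (H₁ ⊔ H₂).comap f with hLdef
  have hLle : L ≤ E'.F (D ∩ M) := by
    intro a ha
    obtain ⟨b, hb, hba⟩ := hliftf ⟨hsupsup ha, ⟨a, rfl⟩⟩
    rwa [hfi hba] at hb
  have hLsupp : SuppNear M E'.F L (T₁ ∪ T₂) := by
    refine ⟨D, hDc, hLle, fun x hx => ?_⟩
    rcases hDs hx with ⟨hx1, hx2⟩
    rcases hx1 with h | h
    · exact Or.inl (hC₁T (hC₁'s ⟨h, hx2⟩))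
    · exact Or.inr (hC₂T (hC₂'s ⟨h, hx2⟩))
  obtain ⟨L₁, L₂, hLsub, hL₁supp, hL₂supp⟩ := hE's T₁ T₂ hT₁ hT₂ L hLsupp
  -- push `L₁`, `L₂` forward along `f`
  obtain ⟨D₁, hD₁c, hL₁le, hD₁s⟩ := hL₁supp
  obtain ⟨D₂, hD₂c, hL₂le, hD₂s⟩ := hL₂supp
  obtain ⟨D₁', hD₁'c, hD₁'s, hpush₁, -⟩ := aux_transfer hbf hD₁c
  obtain ⟨D₂', hD₂'c, hD₂'s, hpush₂, -⟩ := aux_transfer hbf hD₂c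
  -- the corrected lift, supported near both `T₁` and `T₂`
  set K : Submodule R V₂ := (H₁ ⊔ L₁.map f) ⊓ (H₂ ⊔ L₂.map f) with hKdef
  have hK1 : SuppNear M E.F K T₁ := by
    refine ⟨C₁' ∪ D₁', hC₁'c.union hD₁'c, le_trans inf_le_left (sup_le ?_ ?_), ?_⟩
    · exact le_trans inf_le_left
        (E.mono (Set.inter_subset_inter_left _ Set.subset_union_left))
    · exact le_trans (le_trans (Submodule.map_mono hL₁le) hpush₁)
        (E.mono (Set.inter_subset_inter_left _ Set.subset_union_right))
    · rintro x ⟨h | h, hx2⟩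
      · exact hC₁T (hC₁'s ⟨h, hx2⟩)
      · exact hD₁s (hD₁'s ⟨h, hx2⟩)
  have hK2 : SuppNear M E.F K T₂ := by
    refine ⟨C₂' ∪ D₂', hC₂'c.union hD₂'c, le_trans inf_le_right (sup_le ?_ ?_), ?_⟩
    · exact le_trans inf_le_left
        (E.mono (Set.inter_subset_inter_left _ Set.subset_union_left))
    · exact le_trans (le_trans (Submodule.map_mono hL₂le) hpush₂)
        (E.mono (Set.inter_subset_inter_left _ Set.subset_union_right))
    · rintro x ⟨h | h, hx2⟩
      · exact hC₂T (hC₂'s ⟨h, hx2⟩)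
      · exact hD₂s (hD₂'s ⟨h, hx2⟩)
  -- apply insularity of `E` and push down along `g`
  obtain ⟨Cs, hCsc, hKle, hCsT⟩ := hEi T₁ T₂ hT₁ hT₂ K hK1 hK2
  obtain ⟨Cf, hCfc, hCfs, hpushg, -⟩ := aux_transfer hbg hCsc
  -- `H''` lifts to `K`
  have hHK : H'' ≤ K.map g := by
    intro z hz
    obtain ⟨x₁, hx₁, hgx₁⟩ := hsurj₁ z hz
    obtain ⟨x₂, hx₂, hgx₂⟩ := hsurj₂ z hz
    have hker : x₁ - x₂ ∈ LinearMap.range f := by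
      rw [hex, LinearMap.mem_ker, map_sub, hgx₁, hgx₂, sub_self]
    obtain ⟨a, hfa⟩ := hker
    have haL : a ∈ L := by
      show f a ∈ H₁ ⊔ H₂
      rw [hfa]
      exact sub_mem (Submodule.mem_sup_left hx₁) (Submodule.mem_sup_right hx₂)
    obtain ⟨a₁, ha₁, a₂, ha₂, haa⟩ := Submodule.mem_sup.mp (hLsub haL)
    have h' : f a₁ + f a₂ = x₁ - x₂ := by rw [← map_add, haa, hfa]
    have hx1eq : x₁ = x₂ + (f a₁ + f a₂) := by rw [h']; abel
    have heq : x₁ - f a₁ = x₂ + f a₂ := by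
      calc x₁ - f a₁ = x₂ + (f a₁ + f a₂) - f a₁ := by rw [← hx1eq]
        _ = x₂ + f a₂ := by abel
    have hgf : g (f a₁) = 0 := by
      have : f a₁ ∈ LinearMap.ker g := hex ▸ ⟨a₁, rfl⟩
      exact this
    refine ⟨x₁ - f a₁, ⟨?_, ?_⟩, ?_⟩
    · exact sub_mem (Submodule.mem_sup_left hx₁)
        (Submodule.mem_sup_right ⟨a₁, ha₁, rfl⟩)
    · rw [heq]
      exact add_mem (Submodule.mem_sup_left hx₂)
        (Submodule.mem_sup_right ⟨a₂, ha₂, rfl⟩)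
    · rw [map_sub, hgx₁, hgf, sub_zero]
  exact ⟨Cf, hCfc, le_trans hHK (le_trans (Submodule.map_mono hKle) hpushg),
    fun x hx => hCsT (hCfs hx)⟩
end

section
/- If a filtered module F is d-insular for some d ≥ 0 with respect to the metric on M, and the compactification (X, Y) of M is small at infinity, then F is insular at infinity. -/
open Set Topology

section MetricControl

variable {X : Type*} [TopologicalSpace X]

/-- The closed `D`-ball about `x` with respect to the metric `d` on `M`. -/
def dBall (M : Set X) (d : X → X → ℝ) (x : X) (D : ℝ) : Set X :=
  {z | z ∈ M ∧ d x z ≤ D}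

/-- The closed `r`-enlargement `S[r]` of `S` in `M` with respect to `d`. -/
def dEnl (M : Set X) (d : X → X → ℝ) (S : Set X) (r : ℝ) : Set X :=
  {z | z ∈ M ∧ ∃ x ∈ S, d x z ≤ r}

/-- The metric `d` on `M` is small at infinity: for every boundary point `y`, every
`D ≥ 0` and every neighborhood `U` of `y` in `X` there is a neighborhood `V` of `y`
such that `x ∈ V ∩ M` implies `B_D(x) ⊆ U`. -/
def SmallAtInfinity (M : Set X) (d : X → X → ℝ) : Prop :=
  ∀ y ∈ Mᶜ, ∀ D : ℝ, 0 ≤ D → ∀ U ∈ nhds y, ∃ V ∈ nhds y,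
    ∀ x ∈ V ∩ M, dBall M d x D ⊆ U

end MetricControl

variable {X : Type*} [MetricSpace X] [CompactSpace X] {R : Type*} [Ring R]

/-- `F` is `dd`-insular: `F(T) ∩ F(U) ⊆ F(T[dd] ∩ U[dd])` for all subsets of `M`. -/
def IsInsularFilt {V : Type*} [AddCommGroup V] [Module R V] (M : Set X)
    (d : X → X → ℝ) (𝓕 : Set X → Submodule R V) (dd : ℝ) : Prop :=
  ∀ T U : Set X, T ⊆ M → U ⊆ M →
    𝓕 T ⊓ 𝓕 U ≤ 𝓕 (dEnl M d T dd ∩ dEnl M d U dd)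

/-- a `d`-insular filtered module over a proper metric space `M`
whose compactification is small at infinity is insular at infinity. -/
theorem insular_implies_insularAtInfinity
    {V : Type*} [AddCommGroup V] [Module R V]
    {M : Set X} (hM : IsOpen M) (hdense : Dense M)
    (d : X → X → ℝ) (hsymm : ∀ x y, d x y = d y x)
    (hproper : ∀ x ∈ M, ∀ D : ℝ, IsCompact (dBall M d x D))
    (hsmall : SmallAtInfinity M d)
    (F : FilteredModule R V M) (dd : ℝ) (hdd : 0 ≤ dd)
    (hins : IsInsularFilt M d F.F dd) :
    InsularAtInfinity M F.F := by
  intro T₁ T₂ hT₁ hT₂ H h1 h2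
  obtain ⟨C₁, hC₁closed, hH₁, hB₁⟩ := h1
  obtain ⟨C₂, hC₂closed, hH₂, hB₂⟩ := h2
  set E₁ := dEnl M d (C₁ ∩ M) dd with hE₁
  set E₂ := dEnl M d (C₂ ∩ M) dd with hE₂
  -- boundary claim
  have key : ∀ (C T : Set X), IsClosed C → C ∩ Mᶜ ⊆ T →
      closure (dEnl M d (C ∩ M) dd) ∩ Mᶜ ⊆ T := by
    intro C T hCcl hCT y hy
    obtain ⟨hycl, hyM⟩ := hy
    by_cases hyC : y ∈ C
    · exact hCT ⟨hyC, hyM⟩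
    exfalso
    have hU : Cᶜ ∈ nhds y := hCcl.isOpen_compl.mem_nhds hyC
    obtain ⟨V', hV'nhds, hV'⟩ := hsmall y hyM dd hdd Cᶜ hU
    obtain ⟨z, hzV', hzE⟩ := mem_closure_iff_nhds.mp hycl V' hV'nhds
    obtain ⟨hzM, x, hx, hdx⟩ := hzE
    have : x ∈ dBall M d z dd := ⟨hx.2, by rw [hsymm]; exact hdx⟩
    exact hV' z ⟨hzV', hzM⟩ this hx.1
  refine ⟨closure (E₁ ∩ E₂), isClosed_closure, ?_, ?_⟩
  · have h12 : H ≤ F.F (E₁ ∩ E₂) := by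
      intro v hv
      exact hins (C₁ ∩ M) (C₂ ∩ M) (inter_subset_right) (inter_subset_right)
        ⟨hH₁ hv, hH₂ hv⟩
    refine h12.trans (F.mono ?_)
    intro z hz
    exact ⟨subset_closure hz, hz.1.1⟩
  · intro y hy
    have h1 : y ∈ closure E₁ ∩ Mᶜ :=
      ⟨closure_mono (inter_subset_left) hy.1, hy.2⟩
    have h2 : y ∈ closure E₂ ∩ Mᶜ :=
      ⟨closure_mono (inter_subset_right) hy.1, hy.2⟩
    exact ⟨key C₁ T₁ hC₁closed hB₁ h1, key C₂ T₂ hC₂closed hB₂ h2⟩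
end
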